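/- arXiv:1308.2326 — 5 statements merged into one kernel-verified Lean document; each statement's English description precedes it below -/
import Mathlib

section
/- Let A, B > 0, z > 0, and h > 0 be fixed. Define Ã(σ) = (1/2)(A - (σ/z)B) e^{-zh/σ} + (1/2)(A + (σ/z)B) e^{zh/σ} for σ > 0. Then Ã is strictly decreasing on (0,∞), Ã(σ) → ∞ as σ → 0+, and Ã(σ) → A + Bh as σ → ∞; in particular the range of Ã is (A + Bh, ∞). -/
open Filter Topology

lemma aux_sinh_lt_mul_cosh (u : ℝ) (hu : 0 < u) : Real.sinh u < u * Real.cosh u := by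
  have hmono : StrictMonoOn (fun x => x * Real.cosh x - Real.sinh x) (Set.Ici 0) := by
    apply strictMonoOn_of_deriv_pos (convex_Ici 0)
    · fun_prop
    · intro x hx
      rw [interior_Ici, Set.mem_Ioi] at hx
      have h1 : HasDerivAt (fun x => x * Real.cosh x - Real.sinh x) (x * Real.sinh x) x := by
        have := ((hasDerivAt_id x).mul (Real.hasDerivAt_cosh x)).sub (Real.hasDerivAt_sinh x)
        refine this.congr_deriv ?_
        simp only [id_eq]
        ring
      rw [h1.deriv]
      exact mul_pos hx (Real.sinh_pos_iff.2 hx)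
  have := hmono Set.self_mem_Ici (Set.mem_Ici.2 hu.le) hu
  simpa using this

lemma aux_F_mono (A C : ℝ) (hA : 0 < A) (hC : 0 < C) :
    StrictMonoOn (fun u => A * Real.cosh u + C * (Real.sinh u / u)) (Set.Ioi 0) := by
  apply strictMonoOn_of_deriv_pos (convex_Ioi 0)
  · apply ContinuousOn.add (Real.continuous_cosh.continuousOn.const_smul A)
    apply ContinuousOn.mul continuousOn_const
    exact Real.continuous_sinh.continuousOn.div continuousOn_id
      (fun x hx => ne_of_gt hx)
  · intro x hx
    rw [interior_Ioi, Set.mem_Ioi] at hx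
    have hx0 : x ≠ 0 := ne_of_gt hx
    have h1 : HasDerivAt (fun u => A * Real.cosh u + C * (Real.sinh u / u))
        (A * Real.sinh x + C * ((Real.cosh x * x - Real.sinh x * 1) / x ^ 2)) x := by
      have hd := ((Real.hasDerivAt_cosh x).const_mul A).add
        (((Real.hasDerivAt_sinh x).div (hasDerivAt_id x) hx0).const_mul C)
      exact hd
    rw [h1.deriv]
    have h2 : 0 < Real.cosh x * x - Real.sinh x * 1 := by
      have := aux_sinh_lt_mul_cosh x hx
      nlinarith
    have := Real.sinh_pos_iff.2 hx
    positivity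

lemma aux_sinh_div_tendsto : Tendsto (fun u : ℝ => Real.sinh u / u) (𝓝[≠] 0) (𝓝 1) := by
  have h := Real.hasDerivAt_sinh 0
  rw [Real.cosh_zero, hasDerivAt_iff_tendsto_slope] at h
  refine h.congr (fun u => ?_)
  rw [slope_def_field]
  simp

theorem stmt_2 (A B z h : ℝ) (hA : 0 < A) (hB : 0 < B) (hz : 0 < z) (hh : 0 < h) :
    let At : ℝ → ℝ := fun σ =>
      (1 / 2) * (A - (σ / z) * B) * Real.exp (-z * h / σ) +
      (1 / 2) * (A + (σ / z) * B) * Real.exp (z * h / σ)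
    StrictAntiOn At (Set.Ioi 0) ∧
    Tendsto At (nhdsWithin 0 (Set.Ioi 0)) atTop ∧
    Tendsto At atTop (nhds (A + B * h)) ∧
    At '' (Set.Ioi 0) = Set.Ioi (A + B * h) := by
  intro At
  set c : ℝ := z * h with hc
  have hc0 : 0 < c := mul_pos hz hh
  set F : ℝ → ℝ := fun u => A * Real.cosh u + (B * h) * (Real.sinh u / u) with hF
  -- key identity
  have hkey : ∀ σ : ℝ, 0 < σ → At σ = F (c / σ) := by
    intro σ hσ
    have hσ0 : σ ≠ 0 := ne_of_gt hσ
    have hneg : -z * h / σ = -(c / σ) := by rw [hc]; ring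
    have hpos : z * h / σ = c / σ := by rw [hc]
    simp only [At, F, hneg, hpos, Real.cosh_eq, Real.sinh_eq, Real.exp_neg]
    have hcs : c / σ ≠ 0 := by positivity
    field_simp
    ring
  -- F strictly mono on Ioi 0
  have hFmono := aux_F_mono A (B * h) hA (mul_pos hB hh)
  -- strict anti
  have hanti : StrictAntiOn At (Set.Ioi 0) := by
    intro a ha b hb hab
    rw [Set.mem_Ioi] at ha hb
    rw [hkey a ha, hkey b hb]
    have h1 : (0:ℝ) < c / b := by positivity
    have h2 : c / b < c / a := div_lt_div_of_pos_left hc0 ha hab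
    exact hFmono (Set.mem_Ioi.2 h1) (Set.mem_Ioi.2 (h1.trans h2)) h2
  -- tendsto atTop at 0+
  have hzero : Tendsto At (𝓝[>] 0) atTop := by
    have hcosh : Tendsto (fun σ : ℝ => A * Real.cosh (c / σ)) (𝓝[>] 0) atTop := by
      have h1 : Tendsto (fun σ : ℝ => c / σ) (𝓝[>] (0:ℝ)) atTop := by
        simpa [div_eq_mul_inv] using tendsto_inv_nhdsGT_zero.const_mul_atTop hc0
      have h2 : Tendsto Real.cosh atTop atTop := by
        apply tendsto_atTop_mono (fun x => ?_) (Real.tendsto_exp_atTop.atTop_div_const two_pos)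
        rw [Real.cosh_eq]
        have := Real.exp_pos (-x)
        linarith
      exact (h2.comp h1).const_mul_atTop hA
    apply tendsto_atTop_mono' _ _ hcosh
    filter_upwards [self_mem_nhdsWithin] with σ hσ
    rw [Set.mem_Ioi] at hσ
    rw [hkey σ hσ]
    have h1 : (0:ℝ) < c / σ := by positivity
    have h2 : 0 < Real.sinh (c / σ) / (c / σ) :=
      div_pos (Real.sinh_pos_iff.2 h1) h1
    have := mul_pos (mul_pos hB hh) h2
    simp only [F]
    linarith
  -- tendsto at infinity
  have htop : Tendsto At atTop (𝓝 (A + B * h)) := by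
    have h1 : Tendsto (fun σ : ℝ => c / σ) atTop (𝓝[≠] (0:ℝ)) := by
      rw [tendsto_nhdsWithin_iff]
      refine ⟨tendsto_const_nhds.div_atTop tendsto_id, ?_⟩
      filter_upwards [eventually_gt_atTop 0] with σ hσ
      simpa using ne_of_gt (div_pos hc0 hσ)
    have h2 : Tendsto F (𝓝[≠] (0:ℝ)) (𝓝 (A * Real.cosh 0 + (B * h) * 1)) := by
      apply Tendsto.add
      · exact ((Real.continuous_cosh.tendsto 0).const_mul A).mono_left nhdsWithin_le_nhds
      · exact aux_sinh_div_tendsto.const_mul (B * h)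
    have h3 : Tendsto At atTop (𝓝 (A * Real.cosh 0 + (B * h) * 1)) := by
      apply (h2.comp h1).congr'
      filter_upwards [eventually_gt_atTop 0] with σ hσ
      exact (hkey σ hσ).symm
    simpa [Real.cosh_zero] using h3
  refine ⟨hanti, hzero, htop, ?_⟩
  -- image
  have hgt : ∀ σ : ℝ, 0 < σ → A + B * h < At σ := by
    intro σ hσ
    rw [hkey σ hσ]
    have h1 : (0:ℝ) < c / σ := by positivity
    have h2 : 1 < Real.cosh (c / σ) := Real.one_lt_cosh.2 (ne_of_gt h1)
    have h3 : 1 < Real.sinh (c / σ) / (c / σ) :=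
      (one_lt_div h1).2 (Real.self_lt_sinh_iff.2 h1)
    have hBh : (0:ℝ) < B * h := mul_pos hB hh
    have h4 : A * 1 < A * Real.cosh (c / σ) := by nlinarith
    have h5 : (B * h) * 1 < (B * h) * (Real.sinh (c / σ) / (c / σ)) :=
      mul_lt_mul_of_pos_left h3 hBh
    simp only [F]
    nlinarith
  apply Set.eq_of_subset_of_subset
  · rintro y ⟨σ, hσ, rfl⟩
    exact Set.mem_Ioi.2 (hgt σ hσ)
  · intro y hy
    rw [Set.mem_Ioi] at hy
    have hdiv : ∀ a : ℝ, ContinuousOn (fun σ : ℝ => a / σ) (Set.Ioi 0) :=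
      fun a => continuousOn_const.div continuousOn_id (fun x hx => ne_of_gt hx)
    have hcont : ContinuousOn At (Set.Ioi 0) := by
      have e1 : ContinuousOn (fun σ : ℝ => Real.exp (-z * h / σ)) (Set.Ioi 0) :=
        Real.continuous_exp.comp_continuousOn (hdiv (-z * h))
      have e2 : ContinuousOn (fun σ : ℝ => Real.exp (z * h / σ)) (Set.Ioi 0) :=
        Real.continuous_exp.comp_continuousOn (hdiv (z * h))
      have l1 : Continuous (fun σ : ℝ => (1/2 : ℝ) * (A - (σ / z) * B)) := by fun_prop
      have l2 : Continuous (fun σ : ℝ => (1/2 : ℝ) * (A + (σ / z) * B)) := by fun_prop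
      exact (l1.continuousOn.mul e1).add (l2.continuousOn.mul e2)
    obtain ⟨σ₂, hσ₂pos, hσ₂lt⟩ : ∃ σ : ℝ, 0 < σ ∧ At σ < y := by
      obtain ⟨σ, hσ⟩ := ((htop.eventually_lt_const hy).and (eventually_gt_atTop 0)).exists
      exact ⟨σ, hσ.2, hσ.1⟩
    obtain ⟨σ₁, hσ₁pos, hσ₁ge⟩ : ∃ σ : ℝ, 0 < σ ∧ y ≤ At σ := by
      obtain ⟨σ, hσ⟩ := ((hzero.eventually_ge_atTop y).and self_mem_nhdsWithin).exists
      exact ⟨σ, hσ.2, hσ.1⟩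
    have himg : IsPreconnected (At '' Set.Ioi 0) := isPreconnected_Ioi.image At hcont
    exact himg.ordConnected.out (Set.mem_image_of_mem At (Set.mem_Ioi.2 hσ₂pos))
      (Set.mem_image_of_mem At (Set.mem_Ioi.2 hσ₁pos)) ⟨hσ₂lt.le, hσ₁ge⟩
end

section
/- Let A, B > 0, z > 0, and h > 0 be fixed. Define B̃(σ) = -(z/(2σ))(A - (σ/z)B) e^{-zh/σ} + (z/(2σ))(A + (σ/z)B) e^{zh/σ} for σ > 0. Then B̃ is strictly decreasing on (0,∞), with limit ∞ as σ → 0+ and limit B as σ → ∞; in particular its range is (B, ∞). -/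
open Filter Topology

theorem stmt_3 (A B z h : ℝ) (hA : 0 < A) (hB : 0 < B) (hz : 0 < z) (hh : 0 < h) :
    let Bt : ℝ → ℝ := fun σ =>
      -(z / (2 * σ)) * (A - (σ / z) * B) * Real.exp (-z * h / σ) +
      (z / (2 * σ)) * (A + (σ / z) * B) * Real.exp (z * h / σ)
    StrictAntiOn Bt (Set.Ioi 0) ∧
    Tendsto Bt (nhdsWithin 0 (Set.Ioi 0)) atTop ∧
    Tendsto Bt atTop (nhds B) ∧
    Bt '' (Set.Ioi 0) = Set.Ioi B := by
  intro Bt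
  set g : ℝ → ℝ := fun u => A * u * Real.sinh (h * u) + B * Real.cosh (h * u) with hg
  -- Bt σ = g (z / σ) for σ > 0
  have hBt : ∀ σ : ℝ, 0 < σ → Bt σ = g (z / σ) := by
    intro σ hσ
    have e1 : z * h / σ = h * (z / σ) := by ring
    have e2 : -z * h / σ = -(h * (z / σ)) := by ring
    simp only [Bt, hg, e1, e2, Real.sinh_eq, Real.cosh_eq]
    field_simp
    ring
  -- g is strictly monotone on Ici 0
  have hgmono : StrictMonoOn g (Set.Ici 0) := by
    intro u1 h1 u2 h2 h12
    simp only [Set.mem_Ici] at h1 h2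
    have hs1 : 0 ≤ Real.sinh (h * u1) := Real.sinh_nonneg_iff.2 (by positivity)
    have hsle : Real.sinh (h * u1) ≤ Real.sinh (h * u2) :=
      Real.sinh_le_sinh.2 (by nlinarith)
    have hterm1 : A * u1 * Real.sinh (h * u1) ≤ A * u2 * Real.sinh (h * u2) := by
      apply mul_le_mul (by nlinarith) hsle hs1 (by positivity)
    have hcosh : Real.cosh (h * u1) < Real.cosh (h * u2) := by
      apply Real.cosh_lt_cosh.2
      rw [abs_of_nonneg (by positivity), abs_of_nonneg (by positivity)]
      nlinarith
    have : B * Real.cosh (h * u1) < B * Real.cosh (h * u2) := by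
      exact mul_lt_mul_of_pos_left hcosh hB
    simp only [hg]
    linarith
  have hgcont : Continuous g := by
    simp only [hg]; fun_prop
  -- strict anti of Bt
  have hanti : StrictAntiOn Bt (Set.Ioi 0) := by
    intro σ1 h1 σ2 h2 h12
    simp only [Set.mem_Ioi] at h1 h2
    rw [hBt σ1 h1, hBt σ2 h2]
    have : z / σ2 < z / σ1 := by
      apply div_lt_div_of_pos_left hz h1 h12
    exact hgmono (Set.mem_Ici.2 (by positivity)) (Set.mem_Ici.2 (by positivity)) this
  -- g tends to atTop at atTop
  have hgtop : Tendsto g atTop atTop := by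
    have hexp : Tendsto (fun u : ℝ => B / 2 * Real.exp (h * u)) atTop atTop := by
      apply Tendsto.const_mul_atTop (by positivity)
      exact Real.tendsto_exp_atTop.comp (Tendsto.const_mul_atTop hh tendsto_id)
    apply tendsto_atTop_mono' _ _ hexp
    filter_upwards [eventually_ge_atTop (0:ℝ)] with u hu
    have hs : 0 ≤ Real.sinh (h * u) := Real.sinh_nonneg_iff.2 (by positivity)
    have hc : Real.exp (h * u) / 2 ≤ Real.cosh (h * u) := by
      rw [Real.cosh_eq]
      have := Real.exp_pos (-(h * u))
      linarith
    have : B / 2 * Real.exp (h * u) ≤ B * Real.cosh (h * u) := by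
      nlinarith
    have ht : 0 ≤ A * u * Real.sinh (h * u) := by positivity
    simp only [hg]
    linarith
  -- z/σ → atTop as σ → 0+
  have hinv0 : Tendsto (fun σ : ℝ => z / σ) (𝓝[>] 0) atTop := by
    simp only [div_eq_mul_inv]
    exact Tendsto.const_mul_atTop hz tendsto_inv_nhdsGT_zero
  have htend0 : Tendsto Bt (𝓝[>] (0:ℝ)) atTop := by
    apply Tendsto.congr' _ (hgtop.comp hinv0)
    filter_upwards [self_mem_nhdsWithin] with σ (hσ : σ ∈ Set.Ioi 0)
    exact (hBt σ hσ).symm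
  -- z/σ → 0 as σ → atTop
  have hinvtop : Tendsto (fun σ : ℝ => z / σ) atTop (𝓝 0) := by
    simpa [div_eq_mul_inv] using tendsto_inv_atTop_zero.const_mul z
  have hg0 : g 0 = B := by simp [hg]
  have htendB : Tendsto Bt atTop (𝓝 B) := by
    have : Tendsto (fun σ => g (z / σ)) atTop (𝓝 B) := by
      have := (hgcont.tendsto 0).comp hinvtop
      rwa [hg0] at this
    apply Tendsto.congr' _ this
    filter_upwards [eventually_gt_atTop (0:ℝ)] with σ hσ
    exact (hBt σ hσ).symm
  refine ⟨hanti, htend0, htendB, ?_⟩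
  -- image
  apply Set.eq_of_subset_of_subset
  · rintro y ⟨σ, hσ, rfl⟩
    simp only [Set.mem_Ioi] at hσ ⊢
    rw [hBt σ hσ, ← hg0]
    exact hgmono (Set.self_mem_Ici) (Set.mem_Ici.2 (by positivity)) (by positivity)
  · intro y hy
    simp only [Set.mem_Ioi] at hy
    obtain ⟨u, ⟨hyu, hu0⟩⟩ := ((tendsto_atTop.1 hgtop y).and (eventually_ge_atTop (0:ℝ))).exists
    have hmem : y ∈ Set.Icc (g 0) (g u) := ⟨by rw [hg0]; exact hy.le, hyu⟩
    obtain ⟨u0, hu0mem, hgu0⟩ := intermediate_value_Icc hu0 (hgcont.continuousOn) hmem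
    have hu0pos : 0 < u0 := by
      rcases lt_or_eq_of_le hu0mem.1 with hlt | heq
      · exact hlt
      · exfalso; rw [← heq, hg0] at hgu0; exact absurd hgu0 (ne_of_lt hy)
    refine ⟨z / u0, Set.mem_Ioi.2 (by positivity), ?_⟩
    rw [hBt (z / u0) (by positivity)]
    have : z / (z / u0) = u0 := by field_simp
    rw [this, hgu0]
end

section
/- Let z > 0. Suppose V : (L,U) → ℝ is twice continuously differentiable, nonnegative, satisfies a(K)² V''(K) = z² V(K) on (L,U) for a function a bounded between positive constants, and V(L+) = 0 with V'(L+) > 0. Then V is strictly increasing and strictly convex on (L,U). -/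
open Filter Topology

theorem stmt_5 (L U z c C d : ℝ) (hLU : L < U) (hz : 0 < z)
    (V a : ℝ → ℝ)
    (hV_smooth : ContDiffOn ℝ 2 V (Set.Ioo L U))
    (hV_nonneg : ∀ x ∈ Set.Ioo L U, 0 ≤ V x)
    (hc : 0 < c) (ha : ∀ x ∈ Set.Ioo L U, c ≤ a x ∧ a x ≤ C)
    (hODE : ∀ x ∈ Set.Ioo L U, (a x) ^ 2 * deriv (deriv V) x = z ^ 2 * V x)
    (hV_L : Tendsto V (nhdsWithin L (Set.Ioi L)) (nhds 0))
    (hV'_L : Tendsto (deriv V) (nhdsWithin L (Set.Ioi L)) (nhds d)) (hd : 0 < d) :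
    StrictMonoOn V (Set.Ioo L U) ∧ StrictConvexOn ℝ (Set.Ioo L U) V := by
  have hopen : IsOpen (Set.Ioo L U) := isOpen_Ioo
  have ha2 : ∀ x ∈ Set.Ioo L U, 0 < a x ^ 2 := fun x hx =>
    pow_pos (lt_of_lt_of_le hc (ha x hx).1) 2
  -- second derivative nonneg
  have hV''_nonneg : ∀ x ∈ Set.Ioo L U, 0 ≤ deriv (deriv V) x := by
    intro x hx
    have h := hODE x hx
    nlinarith [hV_nonneg x hx, ha2 x hx, sq_nonneg z]
  -- deriv V is C¹ on Ioo
  have hV' : ContDiffOn ℝ 1 (deriv V) (Set.Ioo L U) := by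
    have := hV_smooth.deriv_of_isOpen hopen (m := 1) (by norm_num)
    exact this
  have hV'cont : ContinuousOn (deriv V) (Set.Ioo L U) := hV'.continuousOn
  have hV'diff : DifferentiableOn ℝ (deriv V) (Set.Ioo L U) := by
    intro x hx
    exact ((hV'.contDiffAt (hopen.mem_nhds hx)).differentiableAt one_ne_zero).differentiableWithinAt
  -- deriv V monotone
  have hmono : MonotoneOn (deriv V) (Set.Ioo L U) := by
    apply monotoneOn_of_deriv_nonneg (convex_Ioo L U) hV'cont
    · rw [interior_Ioo]; exact hV'diff
    · rw [interior_Ioo]; exact hV''_nonneg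
  -- deriv V ≥ d
  have hV'_ge : ∀ x ∈ Set.Ioo L U, d ≤ deriv V x := by
    intro x hx
    refine le_of_tendsto hV'_L ?_
    have hmem : Set.Ioo L x ∈ nhdsWithin L (Set.Ioi L) := by
      apply Ioo_mem_nhdsGT_of_mem
      exact ⟨le_rfl, hx.1⟩
    filter_upwards [hmem] with y hy
    exact hmono ⟨hy.1, hy.2.trans hx.2⟩ hx (hy.2.le)
  -- strict monotonicity
  have hsm : StrictMonoOn V (Set.Ioo L U) := by
    apply strictMonoOn_of_deriv_pos (convex_Ioo L U) hV_smooth.continuousOn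
    rw [interior_Ioo]
    intro x hx
    exact lt_of_lt_of_le hd (hV'_ge x hx)
  refine ⟨hsm, ?_⟩
  -- positivity of V
  have hVpos : ∀ x ∈ Set.Ioo L U, 0 < V x := by
    intro x hx
    set y := (L + x) / 2 with hy
    have hy1 : L < y := by simp [hy]; linarith [hx.1]
    have hy2 : y < x := by simp [hy]; linarith [hx.1]
    have hymem : y ∈ Set.Ioo L U := ⟨hy1, hy2.trans hx.2⟩
    calc (0:ℝ) ≤ V y := hV_nonneg y hymem
      _ < V x := hsm hymem hx hy2
  apply strictConvexOn_of_deriv2_pos (convex_Ioo L U) hV_smooth.continuousOn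
  rw [interior_Ioo]
  intro x hx
  have h := hODE x hx
  have : 0 < z ^ 2 * V x := mul_pos (pow_pos hz 2) (hVpos x hx)
  have h2 : 0 < deriv (deriv V) x := by nlinarith [ha2 x hx]
  simpa [Function.iterate_succ, Function.comp] using h2
end

section
/- Let A, B > 0, z > 0, K_j < K_{j+1}, and V̄ > A + B(K_{j+1} - K_j). Define, for a > 0 with a < V̄ and 0 < b < (V̄ - a)/(K_{j+1} - w), the function G(Σ) = (1/2)(a + (Σ/z)b) e^{z(K_{j+1}-w)/Σ} + (1/2)(a - (Σ/z)b) e^{-z(K_{j+1}-w)/Σ}, for Σ > 0, where w ∈ (K_j, K_{j+1}). Then G is strictly decreasing in Σ on (0,∞), with range (a + b(K_{j+1}-w), ∞); in particular there is a unique Σ(a,b) > 0 with G(Σ(a,b)) = V̄. -/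
open Real Set Filter Topology

private lemma sinh_lt_mul_cosh' {t : ℝ} (ht : 0 < t) : Real.sinh t < t * Real.cosh t := by
  have key : StrictMonoOn (fun s => s * Real.cosh s - Real.sinh s) (Set.Ici 0) := by
    apply strictMonoOn_of_deriv_pos (convex_Ici 0)
    · exact ((continuous_id.mul Real.continuous_cosh).sub Real.continuous_sinh).continuousOn
    · intro x hx
      rw [interior_Ici, Set.mem_Ioi] at hx
      have h1 : HasDerivAt (fun s => s * Real.cosh s - Real.sinh s)
          (1 * Real.cosh x + x * Real.sinh x - Real.cosh x) x :=
        ((hasDerivAt_id x).mul (Real.hasDerivAt_cosh x)).sub (Real.hasDerivAt_sinh x)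
      rw [h1.deriv]
      have h2 : 0 < Real.sinh x := Real.sinh_pos_iff.mpr hx
      nlinarith
  have := key Set.self_mem_Ici (Set.mem_Ici.mpr ht.le) ht
  simp only [Real.cosh_zero, Real.sinh_zero, zero_mul, sub_zero] at this
  linarith

private lemma Hmono' {a bc : ℝ} (ha : 0 < a) (hbc : 0 < bc) :
    StrictMonoOn (fun t => a * Real.cosh t + bc * (Real.sinh t / t)) (Set.Ioi 0) := by
  apply strictMonoOn_of_deriv_pos (convex_Ioi 0)
  · apply ContinuousOn.add ((continuous_const.mul Real.continuous_cosh).continuousOn)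
    exact continuousOn_const.mul (Real.continuous_sinh.continuousOn.div continuousOn_id
      (fun x hx => ne_of_gt hx))
  · intro x hx
    rw [interior_Ioi, Set.mem_Ioi] at hx
    have hx0 : x ≠ 0 := ne_of_gt hx
    have hd : HasDerivAt (fun t => a * Real.cosh t + bc * (Real.sinh t / t))
        (a * Real.sinh x + bc * ((Real.cosh x * x - Real.sinh x * 1) / x ^ 2)) x :=
      ((Real.hasDerivAt_cosh x).const_mul a).add
        (((Real.hasDerivAt_sinh x).div (hasDerivAt_id x) hx0).const_mul bc)
    rw [hd.deriv]
    have h1 : 0 < a * Real.sinh x := mul_pos ha (Real.sinh_pos_iff.mpr hx)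
    have h2 : Real.sinh x < x * Real.cosh x := sinh_lt_mul_cosh' hx
    have h3 : 0 < x ^ 2 := by positivity
    have h4 : 0 < (Real.cosh x * x - Real.sinh x * 1) / x ^ 2 :=
      div_pos (by nlinarith) h3
    nlinarith [mul_pos hbc h4]

theorem stmt_14 (A B z Kj Kj1 Vbar w a b : ℝ)
    (hA : 0 < A) (hB : 0 < B) (hz : 0 < z) (hK : Kj < Kj1)
    (hVbar : Vbar > A + B * (Kj1 - Kj))
    (hw : w ∈ Set.Ioo Kj Kj1)
    (ha : 0 < a) (haV : a < Vbar)
    (hb : 0 < b) (hbV : b < (Vbar - a) / (Kj1 - w)) :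
    let G : ℝ → ℝ := fun Sg =>
      (1 / 2) * (a + (Sg / z) * b) * Real.exp (z * (Kj1 - w) / Sg) +
      (1 / 2) * (a - (Sg / z) * b) * Real.exp (-(z * (Kj1 - w)) / Sg)
    StrictAntiOn G (Set.Ioi 0) ∧
    G '' (Set.Ioi 0) = Set.Ioi (a + b * (Kj1 - w)) ∧
    (∃! Sg : ℝ, 0 < Sg ∧ G Sg = Vbar) := by
  intro G
  set c : ℝ := Kj1 - w with hcdef
  have hc : 0 < c := sub_pos.mpr hw.2
  have hzc : 0 < z * c := mul_pos hz hc
  have hbc : 0 < b * c := mul_pos hb hc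
  set H : ℝ → ℝ := fun t => a * Real.cosh t + (b * c) * (Real.sinh t / t) with hHdef
  -- key identity
  have hGeq : ∀ S : ℝ, 0 < S → G S = H (z * c / S) := by
    intro S hS
    have hS0 : S ≠ 0 := ne_of_gt hS
    show (1 / 2) * (a + (S / z) * b) * Real.exp (z * c / S) +
      (1 / 2) * (a - (S / z) * b) * Real.exp (-(z * c) / S) =
      a * Real.cosh (z * c / S) + (b * c) * (Real.sinh (z * c / S) / (z * c / S))
    rw [Real.cosh_eq, Real.sinh_eq, neg_div]
    field_simp
    ring
  -- strict antitonicity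
  have hHmono := Hmono' ha hbc
  have hanti : StrictAntiOn G (Set.Ioi 0) := by
    intro x hx y hy hxy
    rw [Set.mem_Ioi] at hx hy
    rw [hGeq x hx, hGeq y hy]
    have h1 : z * c / y < z * c / x := div_lt_div_of_pos_left hzc hx hxy
    exact hHmono (Set.mem_Ioi.mpr (div_pos hzc hy)) (Set.mem_Ioi.mpr (div_pos hzc hx)) h1
  have hVgt : a + b * c < Vbar := by
    have := (lt_div_iff₀ hc).mp hbV
    linarith
  -- the image
  have himage : G '' (Set.Ioi 0) = Set.Ioi (a + b * c) := by
    have hub : ∀ S : ℝ, 0 < S → a + b * c < G S := by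
      intro S hS
      rw [hGeq S hS]
      have ht : 0 < z * c / S := div_pos hzc hS
      have h1 : 1 < Real.cosh (z * c / S) := Real.one_lt_cosh.mpr (ne_of_gt ht)
      have h2 : 1 < Real.sinh (z * c / S) / (z * c / S) :=
        (one_lt_div ht).mpr (Real.self_lt_sinh_iff.mpr ht)
      show a + b * c < a * Real.cosh (z * c / S) +
        (b * c) * (Real.sinh (z * c / S) / (z * c / S))
      nlinarith [mul_lt_mul_of_pos_left h1 ha, mul_lt_mul_of_pos_left h2 hbc]
    apply Set.eq_of_subset_of_subset
    · rintro y ⟨S, hS, rfl⟩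
      exact Set.mem_Ioi.mpr (hub S (Set.mem_Ioi.mp hS))
    · intro y hy
      rw [Set.mem_Ioi] at hy
      -- small Sigma: G > y
      set T : ℝ := max 1 (y / a) with hTdef
      have hT1 : (1:ℝ) ≤ T := le_max_left _ _
      have hT : 0 < T := lt_of_lt_of_le one_pos hT1
      set S1 : ℝ := z * c / T with hS1def
      have hS1 : 0 < S1 := div_pos hzc hT
      have htS1 : z * c / S1 = T := by
        rw [hS1def]; field_simp
      have hGS1 : y < G S1 := by
        rw [hGeq S1 hS1, htS1]
        have h1 : T < Real.sinh T := Real.self_lt_sinh_iff.mpr hT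
        have h2 : Real.sinh T < Real.cosh T := Real.sinh_lt_cosh T
        have h3 : 1 < Real.sinh T / T := (one_lt_div hT).mpr h1
        have h4 : y / a ≤ T := le_max_right _ _
        have h5 : y ≤ a * T := by
          rw [div_le_iff₀ ha] at h4; linarith
        show y < a * Real.cosh T + (b * c) * (Real.sinh T / T)
        nlinarith [mul_lt_mul_of_pos_left (lt_trans h1 h2) ha, mul_lt_mul_of_pos_left h3 hbc]
      -- large Sigma: G < y, using the limit of H at 0+
      have hslope : Tendsto (fun t : ℝ => Real.sinh t / t) (𝓝[>] 0) (𝓝 1) := by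
        have h0 : HasDerivAt Real.sinh 1 0 := by
          simpa using Real.hasDerivAt_sinh 0
        rw [hasDerivAt_iff_tendsto_slope] at h0
        have h1 : Tendsto (slope Real.sinh 0) (𝓝[>] 0) (𝓝 1) :=
          h0.mono_left (nhdsWithin_mono 0 (fun x hx => ne_of_gt hx))
        refine h1.congr' ?_
        filter_upwards [self_mem_nhdsWithin] with t ht
        rw [slope_def_field]
        simp
      have hHlim : Tendsto H (𝓝[>] 0) (𝓝 (a + b * c)) := by
        have h1 : Tendsto (fun t : ℝ => a * Real.cosh t) (𝓝[>] 0) (𝓝 (a * 1)) := by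
          have h := ((Real.continuous_cosh.tendsto 0).const_mul a)
          rw [Real.cosh_zero] at h
          exact h.mono_left nhdsWithin_le_nhds
        have h2 := hslope.const_mul (b * c)
        have h3 := h1.add h2
        rw [hHdef]
        convert h3 using 2
        · ring
      have hev : ∀ᶠ t in 𝓝[>] (0:ℝ), H t < y := hHlim.eventually_lt_const hy
      have hev2 : ∀ᶠ t in 𝓝[>] (0:ℝ), t < z * c / (S1 + 1) := by
        apply eventually_nhdsWithin_of_eventually_nhds
        exact eventually_lt_nhds (div_pos hzc (by linarith))
      obtain ⟨t0, ⟨ht0y, ht0lt⟩, ht0mem⟩ := ((hev.and hev2).and eventually_mem_nhdsWithin).exists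
      have ht0 : 0 < t0 := ht0mem
      set S2 : ℝ := z * c / t0 with hS2def
      have hS2 : 0 < S2 := div_pos hzc ht0
      have htS2 : z * c / S2 = t0 := by rw [hS2def]; field_simp
      have hGS2 : G S2 < y := by rw [hGeq S2 hS2, htS2]; exact ht0y
      have hS1S2 : S1 < S2 := by
        have h6 : (S1 + 1) * t0 < z * c := by
          have h7 := mul_lt_mul_of_pos_left ht0lt (show (0:ℝ) < S1 + 1 by linarith)
          calc (S1 + 1) * t0 < (S1 + 1) * (z * c / (S1 + 1)) := h7
            _ = z * c := by field_simp
        have h8 : S1 + 1 < S2 := by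
          rw [hS2def, lt_div_iff₀ ht0]; linarith
        linarith
      have hcont : ContinuousOn G (Set.Icc S1 S2) := by
        have hne : ∀ x ∈ Set.Icc S1 S2, x ≠ 0 := fun x hx => ne_of_gt (lt_of_lt_of_le hS1 hx.1)
        apply ContinuousOn.add
        · exact (Continuous.continuousOn (by fun_prop)).mul
            (Real.continuous_exp.comp_continuousOn (continuousOn_const.div continuousOn_id hne))
        · exact (Continuous.continuousOn (by fun_prop)).mul
            (Real.continuous_exp.comp_continuousOn (continuousOn_const.div continuousOn_id hne))
      obtain ⟨S, hSmem, hSy⟩ := intermediate_value_Icc' hS1S2.le hcont ⟨hGS2.le, hGS1.le⟩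
      exact ⟨S, Set.mem_Ioi.mpr (lt_of_lt_of_le hS1 hSmem.1), hSy⟩
  refine ⟨hanti, himage, ?_⟩
  have hVmem : Vbar ∈ G '' (Set.Ioi 0) := by rw [himage]; exact Set.mem_Ioi.mpr hVgt
  obtain ⟨S, hS, hSy⟩ := hVmem
  refine ⟨S, ⟨Set.mem_Ioi.mp hS, hSy⟩, ?_⟩
  rintro S' ⟨hS', hS'y⟩
  exact hanti.injOn (Set.mem_Ioi.mpr hS') hS (by rw [hS'y, hSy])
end

section
/- Let Σ₁, Σ₂ > 0 with Σ₁ ≠ Σ₂, z > 0, and let F₁, F₂ be C² functions on [w, K̄] satisfying Fᵢ'' = (z²/Σᵢ²) Fᵢ with F₁, F₂ > 0 on (w,K̄], F₁(w) < F₂(w), F₁'(w) = F₂'(w), and F₁(K̄) = F₂(K̄). Then F₁ ≤ F₂ on [w,K̄] and F₁'(K̄) > F₂'(K̄). -/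
open Set

private lemma strictMonoOn_aux {w K a b : ℝ} (hwa : w ≤ a) (hbK : b ≤ K)
    (g g' : ℝ → ℝ)
    (hg : ∀ x ∈ Icc w K, HasDerivWithinAt g (g' x) (Icc w K) x)
    (hpos : ∀ x ∈ Ioo a b, 0 < g' x) : StrictMonoOn g (Icc a b) := by
  apply strictMonoOn_of_deriv_pos (convex_Icc a b)
  · exact fun x hx => ((hg x ⟨hwa.trans hx.1, hx.2.trans hbK⟩).continuousWithinAt).mono
      (Icc_subset_Icc hwa hbK)
  · intro x hx
    rw [interior_Icc] at hx
    have hx' : x ∈ Icc w K := ⟨hwa.trans hx.1.le, hx.2.le.trans hbK⟩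
    have hmem : Icc w K ∈ nhds x :=
      Icc_mem_nhds (lt_of_le_of_lt hwa hx.1) (lt_of_lt_of_le hx.2 hbK)
    rw [((hg x hx').hasDerivAt hmem).deriv]
    exact hpos x hx

private lemma strictAntiOn_aux {w K a b : ℝ} (hwa : w ≤ a) (hbK : b ≤ K)
    (g g' : ℝ → ℝ)
    (hg : ∀ x ∈ Icc w K, HasDerivWithinAt g (g' x) (Icc w K) x)
    (hneg : ∀ x ∈ Ioo a b, g' x < 0) : StrictAntiOn g (Icc a b) := by
  apply strictAntiOn_of_deriv_neg (convex_Icc a b)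
  · exact fun x hx => ((hg x ⟨hwa.trans hx.1, hx.2.trans hbK⟩).continuousWithinAt).mono
      (Icc_subset_Icc hwa hbK)
  · intro x hx
    rw [interior_Icc] at hx
    have hx' : x ∈ Icc w K := ⟨hwa.trans hx.1.le, hx.2.le.trans hbK⟩
    have hmem : Icc w K ∈ nhds x :=
      Icc_mem_nhds (lt_of_le_of_lt hwa hx.1) (lt_of_lt_of_le hx.2 hbK)
    rw [((hg x hx').hasDerivAt hmem).deriv]
    exact hneg x hx

theorem stmt_16 (z S1 S2 w Kbar : ℝ)
    (hz : 0 < z) (hS1 : 0 < S1) (hS2 : 0 < S2) (hS : S1 ≠ S2) (hwK : w < Kbar)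
    (F1 F1' F1'' F2 F2' F2'' : ℝ → ℝ)
    (hF1 : ∀ K ∈ Set.Icc w Kbar, HasDerivWithinAt F1 (F1' K) (Set.Icc w Kbar) K)
    (hF1' : ∀ K ∈ Set.Icc w Kbar, HasDerivWithinAt F1' (F1'' K) (Set.Icc w Kbar) K)
    (hF1''c : ContinuousOn F1'' (Set.Icc w Kbar))
    (hF2 : ∀ K ∈ Set.Icc w Kbar, HasDerivWithinAt F2 (F2' K) (Set.Icc w Kbar) K)
    (hF2' : ∀ K ∈ Set.Icc w Kbar, HasDerivWithinAt F2' (F2'' K) (Set.Icc w Kbar) K)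
    (hF2''c : ContinuousOn F2'' (Set.Icc w Kbar))
    (hODE1 : ∀ K ∈ Set.Icc w Kbar, F1'' K = (z ^ 2 / S1 ^ 2) * F1 K)
    (hODE2 : ∀ K ∈ Set.Icc w Kbar, F2'' K = (z ^ 2 / S2 ^ 2) * F2 K)
    (hF1pos : ∀ K ∈ Set.Ioc w Kbar, 0 < F1 K)
    (hF2pos : ∀ K ∈ Set.Ioc w Kbar, 0 < F2 K)
    (hw_lt : F1 w < F2 w)
    (hderiv_eq : F1' w = F2' w)
    (hK_eq : F1 Kbar = F2 Kbar) :
    (∀ K ∈ Set.Icc w Kbar, F1 K ≤ F2 K) ∧ F1' Kbar > F2' Kbar := by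
  set c1 := z ^ 2 / S1 ^ 2 with hc1def
  set c2 := z ^ 2 / S2 ^ 2 with hc2def
  have hc1 : 0 < c1 := div_pos (by positivity) (by positivity)
  have hc2 : 0 < c2 := div_pos (by positivity) (by positivity)
  have hcc : c1 ≠ c2 := by
    intro h
    apply hS
    have hz2 : (0:ℝ) < z ^ 2 := by positivity
    have : S1 ^ 2 = S2 ^ 2 := by
      rw [hc1def, hc2def, div_eq_div_iff (by positivity) (by positivity)] at h
      nlinarith
    nlinarith
  set u : ℝ → ℝ := fun t => F1 t - F2 t with hudef
  set u' : ℝ → ℝ := fun t => F1' t - F2' t with hu'def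
  set u'' : ℝ → ℝ := fun t => F1'' t - F2'' t with hu''def
  have hu : ∀ x ∈ Icc w Kbar, HasDerivWithinAt u (u' x) (Icc w Kbar) x :=
    fun x hx => (hF1 x hx).sub (hF2 x hx)
  have hu' : ∀ x ∈ Icc w Kbar, HasDerivWithinAt u' (u'' x) (Icc w Kbar) x :=
    fun x hx => (hF1' x hx).sub (hF2' x hx)
  have hu''eq : ∀ x ∈ Icc w Kbar, u'' x = c2 * u x + (c1 - c2) * F1 x := by
    intro x hx
    have h1 := hODE1 x hx
    have h2 := hODE2 x hx
    simp only [hu''def, hudef]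
    rw [h1, h2]; ring
  have hcont_u : ContinuousOn u (Icc w Kbar) := fun x hx => (hu x hx).continuousWithinAt
  have hcont_u'' : ContinuousOn u'' (Icc w Kbar) := hF1''c.sub hF2''c
  have huw : u w < 0 := by simp [hudef]; linarith
  have huK : u Kbar = 0 := by simp [hudef]; linarith
  have hu'w : u' w = 0 := by simp [hu'def]; linarith
  have hwmem : w ∈ Icc w Kbar := left_mem_Icc.2 hwK.le
  have hKmem : Kbar ∈ Icc w Kbar := right_mem_Icc.2 hwK.le
  rcases hcc.lt_or_gt with hlt | hgt
  · -- c1 < c2 : impossible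
    exfalso
    set Z : Set ℝ := Icc w Kbar ∩ u ⁻¹' {0} with hZdef
    have hZclosed : IsClosed Z := hcont_u.preimage_isClosed_of_isClosed isClosed_Icc isClosed_singleton
    have hZne : Z.Nonempty := ⟨Kbar, hKmem, by simp [huK]⟩
    have hZbdd : BddBelow Z := ⟨w, fun x hx => hx.1.1⟩
    set t0 := sInf Z with ht0def
    have ht0Z : t0 ∈ Z := hZclosed.csInf_mem hZne hZbdd
    have ht0I : t0 ∈ Icc w Kbar := ht0Z.1
    have hut0 : u t0 = 0 := ht0Z.2
    have hwt0 : w < t0 := by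
      rcases ht0I.1.lt_or_eq with h | h
      · exact h
      · exact absurd hut0 (by rw [← h]; linarith)
    have hneg : ∀ x ∈ Ico w t0, u x < 0 := by
      intro x hx
      have hxI : x ∈ Icc w Kbar := ⟨hx.1, hx.2.le.trans ht0I.2⟩
      have hne : u x ≠ 0 := by
        intro h
        have : t0 ≤ x := csInf_le hZbdd ⟨hxI, h⟩
        exact absurd hx.2 (not_lt.2 this)
      rcases lt_or_gt_of_ne hne with h | h
      · exact h
      · exfalso
        have hIVT := intermediate_value_Icc hx.1 (hcont_u.mono (Icc_subset_Icc le_rfl hxI.2))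
        have h0mem : (0:ℝ) ∈ Icc (u w) (u x) := ⟨huw.le, h.le⟩
        obtain ⟨c, hc, hc0⟩ := hIVT h0mem
        have hcI : c ∈ Icc w Kbar := ⟨hc.1, hc.2.trans hxI.2⟩
        have : t0 ≤ c := csInf_le hZbdd ⟨hcI, hc0⟩
        have : t0 ≤ x := this.trans hc.2
        exact absurd hx.2 (not_lt.2 this)
    have hddneg : ∀ x ∈ Ioo w t0, u'' x < 0 := by
      intro x hx
      have hxI : x ∈ Icc w Kbar := ⟨hx.1.le, hx.2.le.trans ht0I.2⟩
      rw [hu''eq x hxI]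
      have h1 : u x < 0 := hneg x ⟨hx.1.le, hx.2⟩
      have h2 : 0 < F1 x := hF1pos x ⟨hx.1, hxI.2⟩
      nlinarith
    have hanti : StrictAntiOn u' (Icc w t0) :=
      strictAntiOn_aux le_rfl ht0I.2 u' u'' hu' hddneg
    have hu'neg : ∀ x ∈ Ioo w t0, u' x < 0 := by
      intro x hx
      have := hanti (left_mem_Icc.2 hwt0.le) ⟨hx.1.le, hx.2.le⟩ hx.1
      rwa [hu'w] at this
    have hanti2 : StrictAntiOn u (Icc w t0) :=
      strictAntiOn_aux le_rfl ht0I.2 u u' hu hu'neg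
    have := hanti2 (left_mem_Icc.2 hwt0.le) (right_mem_Icc.2 hwt0.le) hwt0
    rw [hut0] at this
    linarith
  · -- c2 < c1 : main case
    have hle : ∀ x ∈ Icc w Kbar, u x ≤ 0 := by
      by_contra h
      push_neg at h
      obtain ⟨t1, ht1I, ht1⟩ := h
      obtain ⟨t, htI, htmax⟩ := isCompact_Icc.exists_isMaxOn ⟨w, hwmem⟩ hcont_u
      have hut : 0 < u t := lt_of_lt_of_le ht1 (htmax ht1I)
      have htw : t ≠ w := fun h => by rw [h] at hut; linarith
      have htK : t ≠ Kbar := fun h => by rw [h, huK] at hut; linarith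
      have htes : t ∈ Ioo w Kbar := ⟨lt_of_le_of_ne htI.1 (Ne.symm htw), lt_of_le_of_ne htI.2 htK⟩
      have hmem : Icc w Kbar ∈ nhds t := Icc_mem_nhds htes.1 htes.2
      have hdt : HasDerivAt u (u' t) t := (hu t htI).hasDerivAt hmem
      have hu't : u' t = 0 := (htmax.isLocalMax hmem).hasDerivAt_eq_zero hdt
      have hu''t : 0 < u'' t := by
        rw [hu''eq t htI]
        have := hF1pos t ⟨htes.1, htI.2⟩
        nlinarith
      have hca : ContinuousAt u'' t := (hcont_u'' t htI).continuousAt hmem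
      have hev : ∀ᶠ x in nhds t, 0 < u'' x := hca.eventually (eventually_gt_nhds hu''t)
      obtain ⟨ε, hε, hball⟩ := Metric.eventually_nhds_iff.mp hev
      set b := min Kbar (t + ε / 2) with hbdef
      have htb : t < b := lt_min htes.2 (by linarith)
      have hbK : b ≤ Kbar := min_le_left _ _
      have hpos'' : ∀ x ∈ Ioo t b, 0 < u'' x := by
        intro x hx
        apply hball
        have hxb : x < t + ε / 2 := lt_of_lt_of_le hx.2 (min_le_right _ _)
        rw [Real.dist_eq, abs_lt]
        constructor <;> [linarith [hx.1]; linarith]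
      have hmono : StrictMonoOn u' (Icc t b) :=
        strictMonoOn_aux htI.1 hbK u' u'' hu' hpos''
      have hu'pos : ∀ x ∈ Ioo t b, 0 < u' x := by
        intro x hx
        have := hmono (left_mem_Icc.2 htb.le) ⟨hx.1.le, hx.2.le⟩ hx.1
        rwa [hu't] at this
      have hmono2 : StrictMonoOn u (Icc t b) :=
        strictMonoOn_aux htI.1 hbK u u' hu hu'pos
      have := hmono2 (left_mem_Icc.2 htb.le) (right_mem_Icc.2 htb.le) htb
      have hble : u b ≤ u t := htmax ⟨htI.1.trans htb.le, hbK⟩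
      linarith
    constructor
    · intro K hK
      have := hle K hK
      simp only [hudef] at this
      linarith
    · by_contra h
      push_neg at h
      have hu'K : u' Kbar ≤ 0 := by simp only [hu'def]; linarith
      have hu''K : 0 < u'' Kbar := by
        rw [hu''eq Kbar hKmem, huK]
        have := hF1pos Kbar ⟨hwK, le_rfl⟩
        nlinarith
      have hcw : ContinuousWithinAt u'' (Icc w Kbar) Kbar := hcont_u'' Kbar hKmem
      have hev : ∀ᶠ x in nhdsWithin Kbar (Icc w Kbar), 0 < u'' x :=
        hcw.eventually (eventually_gt_nhds hu''K)
      obtain ⟨ε, hε, hball⟩ := Metric.mem_nhdsWithin_iff.mp hev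
      set a := max w (Kbar - ε / 2) with hadef
      have haK : a < Kbar := max_lt hwK (by linarith)
      have hwa : w ≤ a := le_max_left _ _
      have hneg'' : ∀ x ∈ Ioo a Kbar, 0 < u'' x := by
        intro x hx
        apply hball
        constructor
        · rw [Metric.mem_ball, Real.dist_eq, abs_lt]
          have : Kbar - ε / 2 ≤ a := le_max_right _ _
          constructor <;> [linarith [hx.1, hx.2]; linarith [hx.2]]
        · exact ⟨hwa.trans hx.1.le, hx.2.le⟩
      have hmono : StrictMonoOn u' (Icc a Kbar) :=
        strictMonoOn_aux hwa le_rfl u' u'' hu' hneg''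
      have hu'neg : ∀ x ∈ Ioo a Kbar, u' x < 0 := by
        intro x hx
        have := hmono ⟨hx.1.le, hx.2.le⟩ (right_mem_Icc.2 haK.le) hx.2
        linarith
      have hanti : StrictAntiOn u (Icc a Kbar) :=
        strictAntiOn_aux hwa le_rfl u u' hu hu'neg
      have := hanti (left_mem_Icc.2 haK.le) (right_mem_Icc.2 haK.le) haK
      rw [huK] at this
      have := hle a ⟨hwa, haK.le⟩
      linarith
end
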